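/- arXiv:2104.07121 — 5 statements merged into one kernel-verified Lean document; each statement's English description precedes it below -/
import Mathlib

section
/- Let G be a simple graph, fix a vertex P of G, and let D be a P-reduced divisor on G of rank zero. Then there exists a vertex Q ≠ P such that |D − Q| = ∅ (i.e., the set of proofs of D contains a vertex different from P). -/
open scoped Classical

/-- A graph: a finite connected multigraph with no loop edges, given by a symmetric
edge-multiplicity function on a finite nonempty vertex type. -/
structure Multigraph where
  V : Type
  [fintypeV : Fintype V]
  [decEqV : DecidableEq V]
  [nonemptyV : Nonempty V]
  adj : V → V → ℕ
  adj_symm : ∀ u v, adj u v = adj v u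
  adj_loopless : ∀ v, adj v v = 0
  conn : ∀ u v, Relation.ReflTransGen (fun a b => adj a b ≠ 0) u v

attribute [instance] Multigraph.fintypeV Multigraph.decEqV Multigraph.nonemptyV

namespace Multigraph

variable (G : Multigraph)

/-- A simple graph: no multiple edges and more than one vertex. -/
def Simple : Prop :=
  (∀ u v, G.adj u v ≤ 1) ∧ 1 < Fintype.card G.V

/-- The degree of a divisor. -/
def deg (D : G.V → ℤ) : ℤ := ∑ v, D v

/-- A divisor is effective if all its coefficients are nonnegative. -/
def Effective (D : G.V → ℤ) : Prop := ∀ v, 0 ≤ D v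

/-- The Laplacian of an integer-valued function on the vertices. -/
def lap (f : G.V → ℤ) : G.V → ℤ := fun v => ∑ w, (G.adj v w : ℤ) * (f v - f w)

/-- The linear system `|D|` is nonempty, i.e. `D` is linearly equivalent to an
effective divisor. -/
def LinNonempty (D : G.V → ℤ) : Prop :=
  ∃ f : G.V → ℤ, G.Effective (D - G.lap f)

/-- The Baker–Norine rank of a divisor: `-1` if `|D| = ∅`, otherwise the maximal
`k` such that `|D - E| ≠ ∅` for every effective divisor `E` of degree `k`. -/
noncomputable def rank (D : G.V → ℤ) : ℤ :=
  if G.LinNonempty D then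
    ((sSup {k : ℕ | ∀ E : G.V → ℤ, G.Effective E → G.deg E = (k : ℤ) →
        G.LinNonempty (D - E)} : ℕ) : ℤ)
  else -1

/-- The divisor `n • P`. -/
def pt (P : G.V) (n : ℤ) : G.V → ℤ := fun v => if v = P then n else 0

/-- The rank Weierstrass set of `G` at `P`. -/
def Hr (P : G.V) : Set ℕ :=
  {n : ℕ | G.rank (G.pt P ((n : ℤ) - 1)) < G.rank (G.pt P (n : ℤ))}

/-- The functional Weierstrass set of `G` at `P`: pole orders at `P` of functions
with a unique pole at `P`. -/
def Hf (P : G.V) : Set ℕ :=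
  {n : ℕ | ∃ f : G.V → ℤ, G.lap f P = -(n : ℤ) ∧ ∀ Q, Q ≠ P → 0 ≤ G.lap f Q}

/-- The number of edges joining `Q` to vertices outside `A`. -/
def outdeg (A : Finset G.V) (Q : G.V) : ℕ := ∑ R ∈ Aᶜ, G.adj Q R

/-- A divisor is `P`-reduced. -/
def Reduced (P : G.V) (D : G.V → ℤ) : Prop :=
  (∀ Q, Q ≠ P → 0 ≤ D Q) ∧
  ∀ A : Finset G.V, A.Nonempty → P ∉ A → ∃ Q ∈ A, D Q < (G.outdeg A Q : ℤ)

/-- `G` is the graph `B_n` with two vertices joined by `n` parallel edges. -/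
def IsBanana (n : ℕ) : Prop :=
  Fintype.card G.V = 2 ∧ ∀ u v, u ≠ v → G.adj u v = n

/-- `G` is the complete graph on `n` vertices. -/
def IsComplete (n : ℕ) : Prop :=
  Fintype.card G.V = n ∧ ∀ u v, u ≠ v → G.adj u v = 1

/-- `G` is the complete bipartite graph with parts `A` (of size `m`) and its
complement (of size `n`). -/
def IsCompleteBipartite (A : Finset G.V) (m n : ℕ) : Prop :=
  A.card = m ∧ Aᶜ.card = n ∧
  ∀ u v, G.adj u v = if (u ∈ A ∧ v ∉ A) ∨ (u ∉ A ∧ v ∈ A) then 1 else 0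

/-- `λ_Q(k)`: the least `n` with `r(nQ) = k`. -/
noncomputable def lam (Q : G.V) (k : ℕ) : ℕ :=
  sInf {n : ℕ | G.rank (G.pt Q (n : ℤ)) = (k : ℤ)}

end Multigraph

/-- `G` is the vertex gluing of `G₁` and `G₂` identifying `P₁` and `P₂` into `P`. -/
def IsVertexGluing (G G₁ G₂ : Multigraph) (P : G.V) (P₁ : G₁.V) (P₂ : G₂.V) : Prop :=
  ∃ (ι₁ : G₁.V → G.V) (ι₂ : G₂.V → G.V),
    Function.Injective ι₁ ∧ Function.Injective ι₂ ∧
    ι₁ P₁ = P ∧ ι₂ P₂ = P ∧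
    (∀ a b, ι₁ a = ι₂ b → ι₁ a = P) ∧
    (∀ v : G.V, (∃ a, ι₁ a = v) ∨ (∃ b, ι₂ b = v)) ∧
    (∀ a b, G.adj (ι₁ a) (ι₁ b) = G₁.adj a b) ∧
    (∀ a b, G.adj (ι₂ a) (ι₂ b) = G₂.adj a b) ∧
    (∀ a b, ι₁ a ≠ P → ι₂ b ≠ P → G.adj (ι₁ a) (ι₂ b) = 0)

/-! Write `A` for the set of vertices where `f` attains its maximum. Every vertex of `A` satisfies
`outdeg_A ≤ Δf`, so if `D - Δf` is effective, `P`-reducedness forces `P ∈ A`. For the theorem,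
rank zero yields a vertex `Q₀` with `|D - Q₀| = ∅`; if `Q₀ = P` then `D(P) = 0`, and reducedness
applied to `V ∖ {P}` in a simple graph gives a neighbour `Q` of `P` with `D(Q) = 0`. If
`D - Q - Δf ≥ 0`, then `P ∈ A` and `Δf(P) ≤ D(P) = 0`, so `f` is maximal at the neighbour `Q` as
well, whence `Δf(Q) ≥ 0 > D(Q) - 1`, a contradiction. -/

namespace Multigraph

section Degree

variable (G : Multigraph)

lemma deg_sub (D E : G.V → ℤ) : G.deg (D - E) = G.deg D - G.deg E := by
  simp only [deg, Pi.sub_apply, Finset.sum_sub_distrib]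

lemma deg_pt (v : G.V) (n : ℤ) : G.deg (G.pt v n) = n := by
  simp [deg, pt]

lemma deg_lap (f : G.V → ℤ) : G.deg (G.lap f) = 0 := by
  have hanti : G.deg (G.lap f) = -G.deg (G.lap f) := by
    simp only [deg, lap, ← Finset.sum_neg_distrib]
    rw [Finset.sum_comm]
    refine Finset.sum_congr rfl fun v _ => Finset.sum_congr rfl fun w _ => ?_
    rw [G.adj_symm]
    ring
  omega

lemma lap_zero : G.lap 0 = 0 := by
  ext v
  simp [lap]

end Degree

section Effective

variable {G : Multigraph}

lemma Effective.deg_nonneg {E : G.V → ℤ} (hE : G.Effective E) : 0 ≤ G.deg E :=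
  Finset.sum_nonneg fun v _ => hE v

lemma Effective.linNonempty {D : G.V → ℤ} (hD : G.Effective D) :
    G.LinNonempty D :=
  ⟨0, by rwa [lap_zero, sub_zero]⟩

lemma LinNonempty.deg_nonneg {D : G.V → ℤ} (hD : G.LinNonempty D) :
    0 ≤ G.deg D := by
  obtain ⟨f, hf⟩ := hD
  simpa [deg_sub, deg_lap] using hf.deg_nonneg

lemma Effective.eq_pt_of_deg_eq_one {E : G.V → ℤ} (hE : G.Effective E)
    (hdeg : G.deg E = 1) : ∃ Q, E = G.pt Q 1 := by
  obtain ⟨Q, hQ⟩ : ∃ Q, 0 < E Q := by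
    by_contra! h
    have : G.deg E ≤ 0 := Finset.sum_nonpos fun v _ => h v
    omega
  have hsplit : E Q + ∑ v ∈ Finset.univ.erase Q, E v = 1 :=
    (Finset.add_sum_erase _ E (Finset.mem_univ Q)).trans hdeg
  have hrest : ∀ v ≠ Q, E v = 0 := fun v hv => by
    have := Finset.single_le_sum (fun u _ => hE u) (Finset.mem_erase.2 ⟨hv, Finset.mem_univ v⟩)
    linarith [hE v]
  have hrest_sum : ∑ v ∈ Finset.univ.erase Q, E v = 0 :=
    Finset.sum_eq_zero fun v hv => hrest v (Finset.ne_of_mem_erase hv)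
  refine ⟨Q, funext fun v => ?_⟩
  by_cases hv : v = Q
  · rw [hv]
    simp only [pt, ↓reduceIte]
    omega
  · simp only [pt, if_neg hv, hrest v hv]

end Effective

section Rank

variable {G : Multigraph} {D : G.V → ℤ}

lemma linNonempty_of_rank_nonneg (hr : 0 ≤ G.rank D) : G.LinNonempty D := by
  by_contra h
  rw [rank, if_neg h] at hr
  omega

lemma bddAbove_rank_set (D : G.V → ℤ) :
    BddAbove {k : ℕ | ∀ E : G.V → ℤ, G.Effective E → G.deg E = (k : ℤ) →
      G.LinNonempty (D - E)} := by
  refine ⟨(G.deg D).toNat, fun k hk => ?_⟩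
  obtain ⟨v⟩ : Nonempty G.V := inferInstance
  have hpt : G.Effective (G.pt v k) := fun u => by unfold pt; split <;> omega
  have := (hk _ hpt (G.deg_pt v k)).deg_nonneg
  rw [deg_sub, deg_pt] at this
  omega

lemma one_le_rank (hD : G.LinNonempty D) (hpts : ∀ Q, G.LinNonempty (D - G.pt Q 1)) :
    1 ≤ G.rank D := by
  rw [rank, if_pos hD, Nat.one_le_cast]
  refine le_csSup (bddAbove_rank_set D) fun E hE hdeg => ?_
  obtain ⟨Q, rfl⟩ := hE.eq_pt_of_deg_eq_one (by exact_mod_cast hdeg)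
  exact hpts Q

end Rank

section Reduced

variable {G : Multigraph}

noncomputable def maxSet (f : G.V → ℤ) : Finset G.V :=
  Finset.univ.filter fun v => f v = Finset.univ.sup' Finset.univ_nonempty f

lemma maxSet_nonempty (f : G.V → ℤ) : (maxSet f).Nonempty := by
  obtain ⟨v, -, hv⟩ := Finset.exists_mem_eq_sup' Finset.univ_nonempty f
  exact ⟨v, Finset.mem_filter.2 ⟨Finset.mem_univ v, hv.symm⟩⟩

lemma outdeg_maxSet_le_lap {f : G.V → ℤ} {v : G.V} (hv : v ∈ maxSet f) :
    (G.outdeg (maxSet f) v : ℤ) ≤ G.lap f v := by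
  have hfv := (Finset.mem_filter.1 hv).2
  rw [outdeg, maxSet, Finset.compl_filter, Nat.cast_sum, Finset.sum_filter]
  refine Finset.sum_le_sum fun w _ => ?_
  split_ifs with hw
  · simp [hfv, hw]
  · have hlt : f w < f v :=
      hfv ▸ lt_of_le_of_ne (Finset.le_sup' f (Finset.mem_univ w)) hw
    nlinarith [(G.adj v w).cast_nonneg (α := ℤ)]

lemma outdeg_erase_self (P Q : G.V) : G.outdeg (Finset.univ.erase P) Q = G.adj Q P := by
  simp [outdeg, Finset.compl_erase]

variable {P : G.V} {D : G.V → ℤ}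

lemma Reduced.mem_maxSet (hD : G.Reduced P D) {f : G.V → ℤ} (hf : G.Effective (D - G.lap f)) :
    P ∈ maxSet f := by
  by_contra hP
  obtain ⟨v, hv, hlt⟩ := hD.2 _ (maxSet_nonempty f) hP
  have := hf v
  simp only [Pi.sub_apply] at this
  linarith [outdeg_maxSet_le_lap hv]

lemma Reduced.nonneg_of_linNonempty (hD : G.Reduced P D) (h : G.LinNonempty D) : 0 ≤ D P := by
  obtain ⟨f, hf⟩ := h
  have := hf P
  simp only [Pi.sub_apply] at this
  linarith [outdeg_maxSet_le_lap (hD.mem_maxSet hf), (G.outdeg (maxSet f) P).cast_nonneg (α := ℤ)]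

lemma Reduced.effective_sub_pt_self (hD : G.Reduced P D) (hP : 1 ≤ D P) :
    G.Effective (D - G.pt P 1) := fun v => by
  by_cases hv : v = P
  · subst hv
    simpa [pt] using hP
  · simpa [pt, hv] using hD.1 v hv

lemma Reduced.exists_lt_adj (hD : G.Reduced P D) (hcard : 1 < Fintype.card G.V) :
    ∃ Q, Q ≠ P ∧ D Q < G.adj Q P := by
  have hne : (Finset.univ.erase P).Nonempty := by
    rw [← Finset.card_pos, Finset.card_erase_of_mem (Finset.mem_univ P), Finset.card_univ]
    omega
  obtain ⟨Q, hQ, hlt⟩ := hD.2 _ hne (Finset.notMem_erase P _)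
  exact ⟨Q, Finset.ne_of_mem_erase hQ, by rwa [outdeg_erase_self] at hlt⟩

lemma Reduced.not_linNonempty_sub_pt (hD : G.Reduced P D) (hDP : D P = 0) {Q : G.V}
    (hDQ : D Q = 0) (hadj : G.adj P Q ≠ 0) : ¬ G.LinNonempty (D - G.pt Q 1) := by
  rintro ⟨f, hf⟩
  have hQP : Q ≠ P := fun h => hadj (h ▸ G.adj_loopless Q)
  have hPmax : P ∈ maxSet f :=
    hD.mem_maxSet fun v => by
      have := hf v
      simp only [Pi.sub_apply, pt] at this ⊢
      split_ifs at this <;> omega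
  have hlapP : G.lap f P ≤ 0 := by
    simpa [pt, hQP.symm, hDP] using hf P
  have houtP : G.outdeg (maxSet f) P = 0 := by
    have := outdeg_maxSet_le_lap hPmax
    omega
  have hQmax : Q ∈ maxSet f := by
    by_contra hQ
    exact hadj (Finset.sum_eq_zero_iff.1 houtP Q (Finset.mem_compl.2 hQ))
  have := hf Q
  simp only [Pi.sub_apply, pt, ↓reduceIte, hDQ] at this
  linarith [outdeg_maxSet_le_lap hQmax, (G.outdeg (maxSet f) Q).cast_nonneg (α := ℤ)]

lemma Reduced.exists_adj_eq_zero (hD : G.Reduced P D) (hG : G.Simple) :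
    ∃ Q, Q ≠ P ∧ D Q = 0 ∧ G.adj P Q ≠ 0 := by
  obtain ⟨Q, hQP, hlt⟩ := hD.exists_lt_adj hG.2
  have := hD.1 Q hQP
  have := hG.1 Q P
  refine ⟨Q, hQP, by omega, ?_⟩
  rw [G.adj_symm]
  omega

end Reduced

end Multigraph

/-- A `P`-reduced divisor of rank zero on a simple graph has a proof which is a
vertex different from `P`. -/
theorem reduced_rank_zero_proof_ne (G : Multigraph) (hG : G.Simple) (P : G.V)
    (D : G.V → ℤ) (hD : G.Reduced P D) (hr : G.rank D = 0) :
    ∃ Q : G.V, Q ≠ P ∧ ¬ G.LinNonempty (D - G.pt Q 1) := by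
  have hLN : G.LinNonempty D := Multigraph.linNonempty_of_rank_nonneg hr.ge
  obtain ⟨Q₀, hQ₀⟩ : ∃ Q₀, ¬ G.LinNonempty (D - G.pt Q₀ 1) := by
    by_contra! h
    have := Multigraph.one_le_rank hLN h
    omega
  by_cases hQ₀P : Q₀ = P
  · subst hQ₀P
    have hDP : D Q₀ = 0 := by
      have := hD.nonneg_of_linNonempty hLN
      by_contra hne
      exact hQ₀ (hD.effective_sub_pt_self (by omega)).linNonempty
    obtain ⟨Q, hQP, hDQ, hadj⟩ := hD.exists_adj_eq_zero hG
    exact ⟨Q, hQP, hD.not_linNonempty_sub_pt hDP hDQ hadj⟩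
  · exact ⟨Q₀, hQ₀P, hQ₀⟩
end

section
/- Let n, m ≥ 1 and let K_{m,n} be the complete bipartite graph with parts of sizes m and n. For every vertex P of degree n (i.e., a vertex in the part of size m), the functional Weierstrass set of K_{m,n} at P is H_f(P) = nℕ ∪ (n(m−1) + ℕ) = { nk : k ∈ ℕ } ∪ { t ∈ ℕ : t ≥ n(m−1) }. -/
open scoped Classical

namespace Multigraph

variable {G : Multigraph}

theorem lap_apply_of_adj_eq_ite {v : G.V} {S : Finset G.V}
    (hv : ∀ w, G.adj v w = if w ∈ S then 1 else 0) (f : G.V → ℤ) :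
    G.lap f v = S.card * f v - ∑ w ∈ S, f w := by
  simp only [lap, hv, Nat.cast_ite, Nat.cast_one, Nat.cast_zero, ite_mul, one_mul, zero_mul,
    Finset.sum_ite_mem, Finset.univ_inter, Finset.sum_sub_distrib, Finset.sum_const, nsmul_eq_mul]

namespace IsCompleteBipartite

variable {A : Finset G.V} {m n : ℕ}

theorem lap_apply_of_mem (hG : G.IsCompleteBipartite A m n) (f : G.V → ℤ) {v : G.V}
    (hv : v ∈ A) : G.lap f v = n * f v - ∑ w ∈ Aᶜ, f w := by
  rw [lap_apply_of_adj_eq_ite (S := Aᶜ) (fun w => by simp [hG.2.2, hv]), hG.2.1]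

theorem lap_apply_of_notMem (hG : G.IsCompleteBipartite A m n) (f : G.V → ℤ) {v : G.V}
    (hv : v ∉ A) : G.lap f v = m * f v - ∑ w ∈ A, f w := by
  rw [lap_apply_of_adj_eq_ite (S := A) (fun w => by simp [hG.2.2, hv]), hG.1]

/-- The witness is `-a` at `P`, `-1` on `s` vertices of the other part and `0` elsewhere. -/
theorem mem_Hf_of_add_eq (hG : G.IsCompleteBipartite A m n) {P : G.V} (hP : P ∈ A)
    {x a s : ℕ} (hs : s ≤ n) (ha : s = 0 ∨ m ≤ a) (hx : x + s = n * a) : x ∈ G.Hf P := by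
  obtain ⟨S, hSB, hScard⟩ := Finset.exists_subset_card_eq (s := Aᶜ) (n := s) (by rwa [hG.2.1])
  have hPS : ∀ v ∈ A, v ∉ S := fun v hv hvS => Finset.mem_compl.mp (hSB hvS) hv
  let f : G.V → ℤ := fun v => if v = P then -(a : ℤ) else if v ∈ S then -1 else 0
  have sum_A : ∑ w ∈ A, f w = -a := by
    rw [Finset.sum_eq_single_of_mem P hP fun w hw hwP => by simp [f, hwP, hPS w hw]]
    simp [f]
  have sum_compl : ∑ w ∈ Aᶜ, f w = -s := by
    have hB : ∀ w ∈ Aᶜ, f w = if w ∈ S then -1 else 0 := fun w hw => by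
      simp [f, show w ≠ P by rintro rfl; exact Finset.mem_compl.mp hw hP]
    rw [Finset.sum_congr rfl hB, Finset.sum_ite_mem, Finset.inter_eq_right.mpr hSB]
    simp [hScard]
  refine ⟨f, ?_, fun Q hQ => ?_⟩
  · rw [hG.lap_apply_of_mem f hP, sum_compl]
    simp only [f, if_pos rfl]
    have : (x : ℤ) + s = n * a := by exact_mod_cast hx
    linarith
  by_cases hQA : Q ∈ A
  · rw [hG.lap_apply_of_mem f hQA, sum_compl]
    simp [f, hQ, hPS Q hQA]
  · rw [hG.lap_apply_of_notMem f hQA, sum_A]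
    by_cases hQS : Q ∈ S
    · have hma : m ≤ a := ha.resolve_left (hScard ▸ (Finset.card_pos.mpr ⟨Q, hQS⟩).ne')
      simp only [f, hQ, hQS, if_false, if_true, mul_neg, mul_one, sub_neg_eq_add]
      omega
    · simp [f, hQ, hQS]

/-- Let `c` be the minimum of `f` on the part of size `n`. Unless `f` is constant there, the
superharmonicity of `f` away from `P` forces `f > c` on `A \ {P}`, and then, at a minimizing
vertex, `f P ≤ c - (m - 1)`; this pushes the pole order above `n (m - 1)`. -/
theorem dvd_or_lt_of_mem_Hf (hG : G.IsCompleteBipartite A m n) (hn : 1 ≤ n) {P : G.V}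
    (hP : P ∈ A) {x : ℕ} (hx : x ∈ G.Hf P) : n ∣ x ∨ n * (m - 1) < x := by
  obtain ⟨f, hfP, hfQ⟩ := hx
  have hx : (x : ℤ) = ∑ w ∈ Aᶜ, f w - n * f P := by
    linarith [hG.lap_apply_of_mem f hP]
  obtain ⟨v₀, hv₀, hmin⟩ := Finset.exists_min_image Aᶜ f
    (Finset.card_pos.mp (hG.2.1 ▸ hn))
  have hv₀A : v₀ ∉ A := Finset.mem_compl.mp hv₀
  have hsum_ge : (n : ℤ) * f v₀ ≤ ∑ w ∈ Aᶜ, f w := by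
    simpa [hG.2.1] using Finset.card_nsmul_le_sum Aᶜ f (f v₀) hmin
  rcases hsum_ge.eq_or_lt with hconst | hsum_gt
  · left
    exact Int.natCast_dvd_natCast.mp ⟨f v₀ - f P, by rw [hx, ← hconst]; ring⟩
  right
  have hgt : ∀ v ∈ A.erase P, f v₀ + 1 ≤ f v := fun v hv => by
    have hv' := hfQ v (Finset.ne_of_mem_erase hv)
    rw [hG.lap_apply_of_mem f (Finset.mem_of_mem_erase hv)] at hv'
    by_contra! h
    nlinarith
  have hm : 1 ≤ m := hG.1 ▸ Finset.card_pos.mpr ⟨P, hP⟩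
  have hsum_A : ((m : ℤ) - 1) * (f v₀ + 1) + f P ≤ ∑ w ∈ A, f w := by
    have := Finset.card_nsmul_le_sum (A.erase P) f (f v₀ + 1) hgt
    rw [Finset.card_erase_of_mem hP, hG.1, nsmul_eq_mul, Nat.cast_sub hm, Nat.cast_one] at this
    linarith [Finset.add_sum_erase A f hP]
  have hv₀' := hfQ v₀ (by rintro rfl; exact hv₀A hP)
  rw [hG.lap_apply_of_notMem f hv₀A] at hv₀'
  have hfP : f P ≤ f v₀ - (m - 1) := by nlinarith
  have : ((n * (m - 1) : ℕ) : ℤ) < x := by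
    push_cast [Nat.cast_sub hm]
    nlinarith
  exact_mod_cast this

end IsCompleteBipartite
end Multigraph

theorem Hf_completeBipartite_general (m n : ℕ) (hn : 1 ≤ n) (G : Multigraph)
    (A : Finset G.V) (hG : G.IsCompleteBipartite A m n) (P : G.V) (hP : P ∈ A) :
    G.Hf P = {x : ℕ | (∃ k : ℕ, x = n * k) ∨ n * (m - 1) ≤ x} := by
  ext x
  refine ⟨fun hx => (hG.dvd_or_lt_of_mem_Hf hn hP hx).imp id le_of_lt, fun hx => ?_⟩
  by_cases hdvd : n ∣ x
  · obtain ⟨k, rfl⟩ := hdvd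
    exact hG.mem_Hf_of_add_eq hP (Nat.zero_le n) (Or.inl rfl) rfl
  have hx : n * (m - 1) ≤ x := hx.resolve_left hdvd
  have hdiv : m - 1 ≤ x / n := (Nat.le_div_iff_mul_le hn).mpr (by rwa [mul_comm])
  have hmod : x % n < n := Nat.mod_lt x hn
  refine hG.mem_Hf_of_add_eq hP (a := x / n + 1) (s := n - x % n) (Nat.sub_le n _)
    (Or.inr (by omega)) ?_
  have := Nat.div_add_mod x n
  rw [mul_add, mul_one]
  omega

/-- The functional Weierstrass set of `K_{m,n}` at a vertex of degree `n` is
`nℕ ∪ (n(m-1) + ℕ)`. -/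
theorem Hf_completeBipartite (m n : ℕ) (hm : 1 ≤ m) (hn : 1 ≤ n) (G : Multigraph)
    (A : Finset G.V) (hG : G.IsCompleteBipartite A m n) (P : G.V) (hP : P ∈ A) :
    G.Hf P = {x : ℕ | (∃ k : ℕ, x = n * k) ∨ n * (m - 1) ≤ x} :=
  Hf_completeBipartite_general m n hn G A hG P hP
end

section
/- Let G be a graph and fix a vertex P of G. The functional Weierstrass set H_f(P) is an additive submonoid of ℕ (it contains 0 and is closed under addition). Moreover, if G is a simple graph, then H_f(P) is a numerical semigroup (i.e., its complement in ℕ is finite). -/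
open scoped Classical

/-! Since the Laplacian is additive, functions with a unique pole at `P` add up, so `H_f(P)` is a
submonoid of `ℕ`. On a simple graph, `P` has a neighbour `Q` joined to it by a single edge; then
`-k·𝟙_P` has pole order `k·deg P`, and for `k = deg Q` the function `-k·𝟙_P - 𝟙_Q` has pole order
`k·deg P - 1`. A submonoid of `ℕ` containing two consecutive integers has gcd `1`, hence finite
complement. -/

theorem AddSubmonoid.finite_compl_of_mem_of_succ_mem (S : AddSubmonoid ℕ) {m : ℕ}
    (hm : m ∈ S) (hm' : m + 1 ∈ S) : (S : Set ℕ)ᶜ.Finite := by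
  have hgcd : Nat.setGcd S = 1 :=
    Nat.dvd_one.mp <| (Nat.dvd_add_right (Nat.setGcd_dvd_of_mem hm)).mp (Nat.setGcd_dvd_of_mem hm')
  refine (Nat.finite_setOfPred_setGcd_dvd_and_mem_span (S : Set ℕ)).subset fun n hn =>
    ⟨hgcd ▸ one_dvd n, fun hspan => hn ?_⟩
  have := (Submodule.span_nat_eq_addSubmonoidClosure (S : Set ℕ)).le hspan
  rwa [AddSubmonoid.closure_eq] at this

namespace Multigraph

variable (G : Multigraph)

def degree (v : G.V) : ℕ := ∑ w, G.adj v w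

lemma adj_le_degree (v w : G.V) : G.adj v w ≤ G.degree v :=
  Finset.single_le_sum (f := G.adj v) (fun _ _ => Nat.zero_le _) (Finset.mem_univ w)

lemma exists_adj_pos (hcard : 1 < Fintype.card G.V) (P : G.V) : ∃ Q, 0 < G.adj P Q := by
  obtain ⟨v, hv⟩ := Fintype.exists_ne_of_one_lt_card hcard P
  obtain hPv | ⟨Q, hPQ, -⟩ := (G.conn P v).cases_head
  · exact absurd hPv.symm hv
  · exact ⟨Q, Nat.pos_of_ne_zero hPQ⟩

lemma lap_apply_eq (f : G.V → ℤ) (v : G.V) :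
    G.lap f v = f v * G.degree v - ∑ w, (G.adj v w : ℤ) * f w := by
  simp only [lap, degree, mul_sub, Finset.sum_sub_distrib, ← Finset.sum_mul, Nat.cast_sum]
  ring

lemma lap_add (f g : G.V → ℤ) : G.lap (f + g) = G.lap f + G.lap g := by
  ext v
  simp only [lap, Pi.add_apply, ← Finset.sum_add_distrib]
  exact Finset.sum_congr rfl fun w _ => by ring

lemma lap_single (P : G.V) (c : ℤ) (v : G.V) :
    G.lap (Pi.single P c) v = (Pi.single P c : G.V → ℤ) v * G.degree v - G.adj v P * c := by
  simp [lap_apply_eq, Pi.single_apply]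

def hfSubmonoid (P : G.V) : AddSubmonoid ℕ where
  carrier := G.Hf P
  zero_mem' := ⟨0, by simp [lap], fun Q _ => by simp [lap]⟩
  add_mem' := by
    rintro m n ⟨f, hfP, hf⟩ ⟨g, hgP, hg⟩
    refine ⟨f + g, ?_, fun Q hQ => ?_⟩
    · rw [lap_add, Pi.add_apply, hfP, hgP]; push_cast; ring
    · rw [lap_add]; exact add_nonneg (hf Q hQ) (hg Q hQ)

lemma mul_degree_mem_Hf (P : G.V) (k : ℕ) : k * G.degree P ∈ G.Hf P := by
  refine ⟨Pi.single P (-k : ℤ), ?_, fun Q hQ => ?_⟩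
  · simp [lap_single, G.adj_loopless]
  · have hnonneg : 0 ≤ (G.adj Q P : ℤ) * k := by positivity
    rw [lap_single, Pi.single_eq_of_ne hQ]
    linarith

lemma mem_Hf_of_add_adj_eq_mul_degree {P Q : G.V} (hPQ : 0 < G.adj P Q) {k : ℕ}
    (hk : G.degree Q ≤ k) {m : ℕ} (hm : m + G.adj P Q = k * G.degree P) : m ∈ G.Hf P := by
  have hQP : Q ≠ P := by rintro rfl; simp [G.adj_loopless] at hPQ
  refine ⟨Pi.single P (-k : ℤ) + Pi.single Q (-1), ?_, fun R hR => ?_⟩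
  · have hmZ : (m : ℤ) + G.adj P Q = k * G.degree P := by exact_mod_cast hm
    rw [lap_add, Pi.add_apply, lap_single, lap_single, Pi.single_eq_same,
      Pi.single_eq_of_ne hQP.symm, G.adj_loopless]
    push_cast
    linarith
  rw [lap_add, Pi.add_apply, lap_single, lap_single, Pi.single_eq_of_ne hR]
  obtain rfl | hRQ := eq_or_ne R Q
  · have hk' : (G.degree R : ℤ) ≤ G.adj R P * k := by
      exact_mod_cast hk.trans (Nat.le_mul_of_pos_left k (G.adj_symm P R ▸ hPQ))
    rw [Pi.single_eq_same, G.adj_loopless]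
    push_cast
    linarith
  · have hP : 0 ≤ (G.adj R P : ℤ) * k := by positivity
    rw [Pi.single_eq_of_ne hRQ]
    linarith

end Multigraph

/-- The functional Weierstrass set is an additive submonoid of `ℕ`; on a simple
graph it is a numerical semigroup (its complement is finite). -/
theorem Hf_structure (G : Multigraph) (P : G.V) :
    0 ∈ G.Hf P ∧ (∀ a ∈ G.Hf P, ∀ b ∈ G.Hf P, a + b ∈ G.Hf P) ∧
      (G.Simple → (G.Hf P)ᶜ.Finite) := by
  refine ⟨(G.hfSubmonoid P).zero_mem, fun a ha b hb => (G.hfSubmonoid P).add_mem ha hb,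
    fun ⟨hsimple, hcard⟩ => ?_⟩
  obtain ⟨Q, hPQ⟩ := G.exists_adj_pos hcard P
  have hPQ_one : G.adj P Q = 1 := le_antisymm (hsimple P Q) hPQ
  have hdeg : G.degree Q * G.degree P ≠ 0 := Nat.mul_ne_zero
    ((G.adj_symm P Q ▸ hPQ).trans_le (G.adj_le_degree Q P)).ne'
    (hPQ.trans_le (G.adj_le_degree P Q)).ne'
  obtain ⟨m, hm⟩ := Nat.exists_eq_add_one_of_ne_zero hdeg
  exact (G.hfSubmonoid P).finite_compl_of_mem_of_succ_mem
    (G.mem_Hf_of_add_adj_eq_mul_degree hPQ le_rfl (hPQ_one ▸ hm.symm))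
    (hm ▸ G.mul_degree_mem_Hf P _)
end

section
/- Let G_1 and G_2 be graphs, let P_1 ∈ V(G_1) and P_2 ∈ V(G_2), let G be the vertex gluing of G_1 and G_2 at P_1 and P_2, and let P ∈ V(G) be the identified vertex. Then the functional Weierstrass set of G at P is the sumset of the functional Weierstrass sets of the pieces: H_f^G(P) = H_f^{G_1}(P_1) + H_f^{G_2}(P_2) = { a + b : a ∈ H_f^{G_1}(P_1), b ∈ H_f^{G_2}(P_2) }. -/
open scoped Classical

/-!
The Laplacian of a function on a glued graph splits along the gluing: away from the glued vertex
`P` it is the Laplacian of the restriction to the piece containing the vertex, and at `P` it is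
the sum of the two Laplacians at `P₁` and `P₂`. Since a Laplacian sums to zero, a function with a
unique pole at `P` restricts to functions with a unique pole (or none) at `P₁` and `P₂`, whose
orders add up. Conversely, two functions with unique poles at `P₁` and `P₂`, normalised to vanish
there, glue to a function on `G` whose pole order is the sum.
-/

namespace Multigraph

variable (G : Multigraph)

theorem sum_lap (f : G.V → ℤ) : ∑ v, G.lap f v = 0 := by
  have hanti : ∑ v, G.lap f v = -∑ v, G.lap f v :=
    calc ∑ v, G.lap f v = ∑ w, ∑ v, (G.adj v w : ℤ) * (f v - f w) := Finset.sum_comm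
      _ = ∑ w, ∑ v, -((G.adj w v : ℤ) * (f w - f v)) := by
        simp only [G.adj_symm, neg_mul_eq_mul_neg, neg_sub]
      _ = -∑ v, G.lap f v := by simp only [lap, Finset.sum_neg_distrib]
  linarith

variable {G}

theorem lap_nonpos_of_forall_ne_nonneg {f : G.V → ℤ} {P : G.V}
    (hf : ∀ Q, Q ≠ P → 0 ≤ G.lap f Q) : G.lap f P ≤ 0 := by
  have hsum := G.sum_lap f
  rw [← Finset.add_sum_erase _ _ (Finset.mem_univ P)] at hsum
  have : 0 ≤ ∑ v ∈ Finset.univ.erase P, G.lap f v :=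
    Finset.sum_nonneg fun v hv => hf v (Finset.ne_of_mem_erase hv)
  linarith

theorem lap_sub_const (f : G.V → ℤ) (c : ℤ) : G.lap (fun v => f v - c) = G.lap f := by
  funext v
  exact Finset.sum_congr rfl fun w _ => by ring

theorem neg_lap_toNat_mem_Hf {f : G.V → ℤ} {P : G.V} (hf : ∀ Q, Q ≠ P → 0 ≤ G.lap f Q) :
    (-G.lap f P).toNat ∈ G.Hf P :=
  ⟨f, by rw [Int.toNat_of_nonneg (by linarith [lap_nonpos_of_forall_ne_nonneg hf])]; ring, hf⟩

theorem exists_apply_eq_zero_of_mem_Hf {P : G.V} {n : ℕ} (hn : n ∈ G.Hf P) :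
    ∃ f : G.V → ℤ, f P = 0 ∧ G.lap f P = -(n : ℤ) ∧ ∀ Q, Q ≠ P → 0 ≤ G.lap f Q := by
  obtain ⟨f, hfP, hf⟩ := hn
  exact ⟨fun v => f v - f P, sub_self _, by rwa [lap_sub_const], by rwa [lap_sub_const]⟩

end Multigraph

structure VertexGluing (G G₁ G₂ : Multigraph) (P : G.V) (P₁ : G₁.V) (P₂ : G₂.V) where
  ι₁ : G₁.V → G.V
  ι₂ : G₂.V → G.V
  injective₁ : Function.Injective ι₁
  injective₂ : Function.Injective ι₂
  ι₁_apex : ι₁ P₁ = P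
  ι₂_apex : ι₂ P₂ = P
  eq_apex_of_ι₁_eq_ι₂ : ∀ a b, ι₁ a = ι₂ b → ι₁ a = P
  range_ι₁_or_range_ι₂ : ∀ v : G.V, (∃ a, ι₁ a = v) ∨ (∃ b, ι₂ b = v)
  adj_ι₁ : ∀ a b, G.adj (ι₁ a) (ι₁ b) = G₁.adj a b
  adj_ι₂ : ∀ a b, G.adj (ι₂ a) (ι₂ b) = G₂.adj a b
  adj_ι₁_ι₂ : ∀ a b, ι₁ a ≠ P → ι₂ b ≠ P → G.adj (ι₁ a) (ι₂ b) = 0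

theorem IsVertexGluing.nonempty {G G₁ G₂ : Multigraph} {P : G.V} {P₁ : G₁.V} {P₂ : G₂.V}
    (h : IsVertexGluing G G₁ G₂ P P₁ P₂) : Nonempty (VertexGluing G G₁ G₂ P P₁ P₂) :=
  let ⟨ι₁, ι₂, h₁, h₂, h₃, h₄, h₅, h₆, h₇, h₈, h₉⟩ := h
  ⟨⟨ι₁, ι₂, h₁, h₂, h₃, h₄, h₅, h₆, h₇, h₈, h₉⟩⟩

namespace VertexGluing

variable {G G₁ G₂ : Multigraph} {P : G.V} {P₁ : G₁.V} {P₂ : G₂.V}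

section

variable (Γ : VertexGluing G G₁ G₂ P P₁ P₂)

def swap : VertexGluing G G₂ G₁ P P₂ P₁ where
  ι₁ := Γ.ι₂
  ι₂ := Γ.ι₁
  injective₁ := Γ.injective₂
  injective₂ := Γ.injective₁
  ι₁_apex := Γ.ι₂_apex
  ι₂_apex := Γ.ι₁_apex
  eq_apex_of_ι₁_eq_ι₂ a b h := h ▸ Γ.eq_apex_of_ι₁_eq_ι₂ b a h.symm
  range_ι₁_or_range_ι₂ v := (Γ.range_ι₁_or_range_ι₂ v).symm
  adj_ι₁ := Γ.adj_ι₂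
  adj_ι₂ := Γ.adj_ι₁
  adj_ι₁_ι₂ a b ha hb := by rw [G.adj_symm]; exact Γ.adj_ι₁_ι₂ b a hb ha

theorem ι₁_eq_apex_iff {a : G₁.V} : Γ.ι₁ a = P ↔ a = P₁ :=
  ⟨fun h => Γ.injective₁ (h.trans Γ.ι₁_apex.symm), fun h => h ▸ Γ.ι₁_apex⟩

theorem ι₂_eq_apex_iff {b : G₂.V} : Γ.ι₂ b = P ↔ b = P₂ :=
  Γ.swap.ι₁_eq_apex_iff

theorem sum_univ (g : G.V → ℤ) : ∑ v, g v = ∑ a, g (Γ.ι₁ a) + ∑ b, g (Γ.ι₂ b) - g P := by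
  have hunion : Finset.univ.image Γ.ι₁ ∪ Finset.univ.image Γ.ι₂ = Finset.univ := by
    ext v
    simpa [eq_comm] using Γ.range_ι₁_or_range_ι₂ v
  have hinter : Finset.univ.image Γ.ι₁ ∩ Finset.univ.image Γ.ι₂ = {P} := by
    ext v
    simp only [Finset.mem_inter, Finset.mem_image, Finset.mem_univ, true_and,
      Finset.mem_singleton]
    constructor
    · rintro ⟨⟨a, rfl⟩, ⟨b, hb⟩⟩
      exact Γ.eq_apex_of_ι₁_eq_ι₂ a b hb.symm
    · rintro rfl
      exact ⟨⟨P₁, Γ.ι₁_apex⟩, ⟨P₂, Γ.ι₂_apex⟩⟩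
  have h := Finset.sum_union_inter (s₁ := Finset.univ.image Γ.ι₁)
    (s₂ := Finset.univ.image Γ.ι₂) (f := g)
  rw [hunion, hinter, Finset.sum_singleton, Finset.sum_image fun a _ b _ h => Γ.injective₁ h,
    Finset.sum_image fun a _ b _ h => Γ.injective₂ h] at h
  linarith

/-- `P` is the only neighbour of `ι₁ a` in the second piece, so the second sum in `sum_univ`
reduces to the term subtracted there. -/
theorem lap_ι₁ (f : G.V → ℤ) {a : G₁.V} (ha : a ≠ P₁) :
    G.lap f (Γ.ι₁ a) = G₁.lap (f ∘ Γ.ι₁) a := by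
  have hP : Γ.ι₁ a ≠ P := Γ.ι₁_eq_apex_iff.not.2 ha
  have hsecond : ∑ b, (G.adj (Γ.ι₁ a) (Γ.ι₂ b) : ℤ) * (f (Γ.ι₁ a) - f (Γ.ι₂ b))
      = (G.adj (Γ.ι₁ a) P : ℤ) * (f (Γ.ι₁ a) - f P) := by
    rw [Finset.sum_eq_single P₂ (fun b _ hb => ?_) (by simp), Γ.ι₂_apex]
    rw [Γ.adj_ι₁_ι₂ a b hP (Γ.ι₂_eq_apex_iff.not.2 hb)]
    simp
  unfold Multigraph.lap
  rw [Γ.sum_univ, hsecond]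
  simp only [Γ.adj_ι₁, Function.comp_apply]
  ring

theorem lap_ι₂ (f : G.V → ℤ) {b : G₂.V} (hb : b ≠ P₂) :
    G.lap f (Γ.ι₂ b) = G₂.lap (f ∘ Γ.ι₂) b :=
  Γ.swap.lap_ι₁ f hb

theorem lap_comp_ι₁_apex (f : G.V → ℤ) :
    G₁.lap (f ∘ Γ.ι₁) P₁ = ∑ a, (G.adj P (Γ.ι₁ a) : ℤ) * (f P - f (Γ.ι₁ a)) := by
  simp only [Multigraph.lap, Function.comp_apply, ← Γ.adj_ι₁, Γ.ι₁_apex]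

theorem lap_apex (f : G.V → ℤ) :
    G.lap f P = G₁.lap (f ∘ Γ.ι₁) P₁ + G₂.lap (f ∘ Γ.ι₂) P₂ := by
  have h₂ : G₂.lap (f ∘ Γ.ι₂) P₂ = ∑ b, (G.adj P (Γ.ι₂ b) : ℤ) * (f P - f (Γ.ι₂ b)) :=
    Γ.swap.lap_comp_ι₁_apex f
  rw [Γ.lap_comp_ι₁_apex, h₂]
  unfold Multigraph.lap
  rw [Γ.sum_univ]
  simp

theorem forall_ne_apex_lap_nonneg_iff (f : G.V → ℤ) :
    (∀ Q, Q ≠ P → 0 ≤ G.lap f Q) ↔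
      (∀ a, a ≠ P₁ → 0 ≤ G₁.lap (f ∘ Γ.ι₁) a) ∧ (∀ b, b ≠ P₂ → 0 ≤ G₂.lap (f ∘ Γ.ι₂) b) := by
  constructor
  · intro hf
    exact ⟨fun a ha => Γ.lap_ι₁ f ha ▸ hf _ (Γ.ι₁_eq_apex_iff.not.2 ha),
      fun b hb => Γ.lap_ι₂ f hb ▸ hf _ (Γ.ι₂_eq_apex_iff.not.2 hb)⟩
  · rintro ⟨h₁, h₂⟩ Q hQ
    rcases Γ.range_ι₁_or_range_ι₂ Q with ⟨a, rfl⟩ | ⟨b, rfl⟩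
    · have ha := Γ.ι₁_eq_apex_iff.not.1 hQ
      exact Γ.lap_ι₁ f ha ▸ h₁ a ha
    · have hb := Γ.ι₂_eq_apex_iff.not.1 hQ
      exact Γ.lap_ι₂ f hb ▸ h₂ b hb

noncomputable def glue (f₁ : G₁.V → ℤ) (f₂ : G₂.V → ℤ) : G.V → ℤ :=
  Function.extend Γ.ι₁ f₁ (Function.extend Γ.ι₂ f₂ 0)

theorem glue_comp_ι₁ (f₁ : G₁.V → ℤ) (f₂ : G₂.V → ℤ) : Γ.glue f₁ f₂ ∘ Γ.ι₁ = f₁ :=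
  Function.extend_comp Γ.injective₁ _ _

theorem glue_comp_ι₂ {f₁ : G₁.V → ℤ} {f₂ : G₂.V → ℤ} (h : f₁ P₁ = f₂ P₂) :
    Γ.glue f₁ f₂ ∘ Γ.ι₂ = f₂ := by
  funext b
  by_cases hb : ∃ a, Γ.ι₁ a = Γ.ι₂ b
  · obtain ⟨a, hab⟩ := hb
    have ha : a = P₁ := Γ.ι₁_eq_apex_iff.1 (Γ.eq_apex_of_ι₁_eq_ι₂ a b hab)
    have hb : b = P₂ := Γ.ι₂_eq_apex_iff.1 (hab ▸ Γ.eq_apex_of_ι₁_eq_ι₂ a b hab)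
    subst ha hb
    rw [Function.comp_apply, ← hab, glue, Γ.injective₁.extend_apply, h]
  · rw [Function.comp_apply, glue, Function.extend_apply' _ _ _ hb,
      Γ.injective₂.extend_apply]

end

theorem exists_add_eq_of_mem_Hf (Γ : VertexGluing G G₁ G₂ P P₁ P₂) {n : ℕ} (hn : n ∈ G.Hf P) :
    ∃ a ∈ G₁.Hf P₁, ∃ b ∈ G₂.Hf P₂, n = a + b := by
  obtain ⟨f, hfP, hf⟩ := hn
  obtain ⟨h₁, h₂⟩ := (Γ.forall_ne_apex_lap_nonneg_iff f).1 hf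
  refine ⟨_, Multigraph.neg_lap_toNat_mem_Hf h₁, _, Multigraph.neg_lap_toNat_mem_Hf h₂, ?_⟩
  have hsplit := Γ.lap_apex f
  have := Multigraph.lap_nonpos_of_forall_ne_nonneg h₁
  have := Multigraph.lap_nonpos_of_forall_ne_nonneg h₂
  omega

theorem add_mem_Hf (Γ : VertexGluing G G₁ G₂ P P₁ P₂) {a b : ℕ} (ha : a ∈ G₁.Hf P₁)
    (hb : b ∈ G₂.Hf P₂) : a + b ∈ G.Hf P := by
  obtain ⟨f₁, hf₁P₁, hf₁P, hf₁⟩ := Multigraph.exists_apply_eq_zero_of_mem_Hf ha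
  obtain ⟨f₂, hf₂P₂, hf₂P, hf₂⟩ := Multigraph.exists_apply_eq_zero_of_mem_Hf hb
  have h₁ := Γ.glue_comp_ι₁ f₁ f₂
  have h₂ := Γ.glue_comp_ι₂ (hf₁P₁.trans hf₂P₂.symm)
  refine ⟨Γ.glue f₁ f₂, ?_, (Γ.forall_ne_apex_lap_nonneg_iff _).2 ⟨by rwa [h₁], by rwa [h₂]⟩⟩
  rw [Γ.lap_apex, h₁, h₂, hf₁P, hf₂P]
  push_cast
  ring

end VertexGluing

/-- The functional Weierstrass set of a vertex gluing is the sumset of the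
functional Weierstrass sets of the pieces. -/
theorem Hf_vertexGluing (G G₁ G₂ : Multigraph) (P : G.V) (P₁ : G₁.V) (P₂ : G₂.V)
    (h : IsVertexGluing G G₁ G₂ P P₁ P₂) :
    G.Hf P = {x : ℕ | ∃ a ∈ G₁.Hf P₁, ∃ b ∈ G₂.Hf P₂, x = a + b} := by
  obtain ⟨Γ⟩ := h.nonempty
  ext n
  constructor
  · exact Γ.exists_add_eq_of_mem_Hf
  · rintro ⟨a, ha, b, hb, rfl⟩
    exact Γ.add_mem_Hf ha hb
end

section
/- For every additive submonoid M of ℕ there exists a graph G and a vertex P ∈ V(G) such that the functional Weierstrass set of G at P equals M, i.e., H_f(P) = M. -/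
open scoped Classical

/-
Every additive submonoid `M` of `ℕ` is finitely generated, say by positive integers
`w₁, …, wₖ`. Take the star with centre `P` joined to leaf `i` by `wᵢ` parallel edges.
A function `f` has no pole at leaf `i` exactly when `f i ≥ f P`, and then its pole at `P`
has order `∑ wᵢ (f i - f P)`; these orders are exactly the `ℕ`-combinations of the `wᵢ`.
-/

namespace Multigraph

section Star

variable {ι : Type} (w : ι → ℕ)

/-- The centre `none` is joined to the leaf `some i` by `w i` edges. -/
def starAdj : Option ι → Option ι → ℕ
  | none, some i => w i
  | some i, none => w i
  | _, _ => 0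

@[simp] lemma starAdj_none_some (i : ι) : starAdj w none (some i) = w i := rfl
@[simp] lemma starAdj_some_none (i : ι) : starAdj w (some i) none = w i := rfl
@[simp] lemma starAdj_some_some (i j : ι) : starAdj w (some i) (some j) = 0 := rfl

lemma starAdj_symm (u v : Option ι) : starAdj w u v = starAdj w v u := by
  cases u <;> cases v <;> rfl

variable {w}

lemma starAdj_reachable (hw : ∀ i, w i ≠ 0) (u v : Option ι) :
    Relation.ReflTransGen (fun a b => starAdj w a b ≠ 0) u v := by
  have to_centre : ∀ u, Relation.ReflTransGen (fun a b => starAdj w a b ≠ 0) u none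
    | none => .refl
    | some i => .single (hw i)
  have from_centre : ∀ v, Relation.ReflTransGen (fun a b => starAdj w a b ≠ 0) none v
    | none => .refl
    | some i => .single (hw i)
  exact (to_centre u).trans (from_centre v)

variable [Fintype ι]

noncomputable abbrev star (w : ι → ℕ) (hw : ∀ i, w i ≠ 0) : Multigraph where
  V := Option ι
  adj := starAdj w
  adj_symm := starAdj_symm w
  adj_loopless v := by cases v <;> rfl
  conn := starAdj_reachable hw

variable (hw : ∀ i, w i ≠ 0) (f : Option ι → ℤ)

lemma star_lap_none :
    (star w hw).lap f none = ∑ i, (w i : ℤ) * (f none - f (some i)) := by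
  simp [lap, star, Fintype.sum_option]

lemma star_lap_some (i : ι) :
    (star w hw).lap f (some i) = (w i : ℤ) * (f (some i) - f none) := by
  simp [lap, star, Fintype.sum_option]

theorem star_Hf_none : (star w hw).Hf none = AddSubmonoid.closure (Set.range w) := by
  ext n
  rw [SetLike.mem_coe, AddSubmonoid.mem_closure_range_iff_of_fintype]
  constructor
  · rintro ⟨f, hpole, hleaves⟩
    have hincr (i : ι) : 0 ≤ f (some i) - f none := by
      have := hleaves (some i) (Option.some_ne_none i)
      rw [star_lap_some] at this
      exact nonneg_of_mul_nonneg_right this (by exact_mod_cast Nat.pos_of_ne_zero (hw i))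
    refine ⟨fun i => (f (some i) - f none).toNat, ?_⟩
    have hn : (n : ℤ) = ∑ i, (w i : ℤ) * (f (some i) - f none) := by
      rw [← neg_neg (n : ℤ), ← hpole, star_lap_none, ← Finset.sum_neg_distrib]
      exact Finset.sum_congr rfl fun i _ => by ring
    zify
    rw [hn]
    refine Finset.sum_congr rfl fun i _ => ?_
    rw [smul_eq_mul, Nat.cast_mul, Int.toNat_of_nonneg (hincr i), mul_comm]
  · rintro ⟨a, rfl⟩
    refine ⟨fun v => v.elim 0 fun i => (a i : ℤ), ?_, ?_⟩
    · rw [star_lap_none, ← neg_eq_iff_eq_neg, ← Finset.sum_neg_distrib]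
      push_cast
      exact Finset.sum_congr rfl fun i _ => by simp [mul_comm]
    · rintro (_ | i) hi
      · exact absurd rfl hi
      · rw [star_lap_some]
        simp only [Option.elim_some, Option.elim_none, sub_zero]
        positivity

end Star

end Multigraph

lemma AddSubmonoid.exists_finset_pos_closure_eq (M : AddSubmonoid ℕ) :
    ∃ s : Finset ℕ, 0 ∉ s ∧ AddSubmonoid.closure (s : Set ℕ) = M := by
  obtain ⟨s, hs⟩ := Nat.addSubmonoid_fg M
  refine ⟨s.erase 0, Finset.notMem_erase 0 s, ?_⟩
  rw [Finset.coe_erase, ← AddSubmonoid.closure_insert_zero, Set.insert_sdiff_singleton,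
    AddSubmonoid.closure_insert_zero, hs]

/-- Every additive submonoid of `ℕ` is the functional Weierstrass set of some
graph at some vertex. -/
theorem Hf_realizes_addSubmonoid (M : AddSubmonoid ℕ) :
    ∃ (G : Multigraph) (P : G.V), G.Hf P = (M : Set ℕ) := by
  obtain ⟨s, hs0, hsM⟩ := M.exists_finset_pos_closure_eq
  have hpos (i : s) : (i : ℕ) ≠ 0 := fun h => hs0 (h ▸ i.2)
  refine ⟨Multigraph.star Subtype.val hpos, none, ?_⟩
  rw [Multigraph.star_Hf_none, Subtype.range_coe, hsM]
end
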